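/- arXiv:0901.2991 — 4 statements merged into one kernel-verified Lean document; each statement's English description precedes it below -/
import Mathlib

section
/- Let ξ₁, ξ₂, b be real numbers with ξ₁ ≠ 0 and ξ₂² + b² > 0. Then the absolute value of the determinant of the matrix M satisfies |det M| = 2 (ξ₁² + ξ₂² + b²)^{3/2} / ((ξ₂² + b²) |ξ₁|) ≥ 2; in particular M is invertible. -/
open Complex Matrix

/-!
Keeping `r` as a free parameter, a cofactor expansion gives
`det M = -2 r (ξ₁² + s) / (s ξ₁)`, the terms carrying `i` cancelling through `i² = -1`;
with `r² = ξ₁² + s` this is `-2 r³ / (s ξ₁)`. The bound `≥ 2` holds because `|ξ₁| ≤ r` and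
`s ≤ r²`, so `s |ξ₁| ≤ r³`.
-/

noncomputable def modeMatrix (x k b r : ℂ) : Matrix (Fin 3) (Fin 3) ℂ :=
  !![(k * r + I * (x * b)) / (k ^ 2 + b ^ 2), -I * b / x,
      (-(k * r) + I * (x * b)) / (k ^ 2 + b ^ 2);
    (x * k + I * (b * r)) / (k ^ 2 + b ^ 2), -k / x, (x * k - I * (b * r)) / (k ^ 2 + b ^ 2);
    1, 1, 1]

theorem det_modeMatrix {x k b : ℂ} (r : ℂ) (hx : x ≠ 0) (hs : k ^ 2 + b ^ 2 ≠ 0) :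
    (modeMatrix x k b r).det = -2 * r * (x ^ 2 + k ^ 2 + b ^ 2) / ((k ^ 2 + b ^ 2) * x) := by
  rw [det_fin_three]
  simp only [modeMatrix, of_apply, cons_val', cons_val_zero, cons_val_one, cons_val_two,
    head_cons, tail_cons, empty_val', cons_val_fin_one, head_fin_const]
  field_simp
  linear_combination 2 * r * b ^ 2 * (x ^ 2 + k ^ 2 + b ^ 2) * I_sq

theorem two_le_two_mul_pow_three_div {x s r : ℝ} (hx : x ≠ 0) (hs : 0 < s) (hr : 0 ≤ r)
    (hr2 : r ^ 2 = x ^ 2 + s) : 2 ≤ 2 * r ^ 3 / (s * |x|) := by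
  have hxr : |x| ≤ r := abs_le_of_sq_le_sq (by linarith) hr
  have hsr : s ≤ r ^ 2 := by linarith [sq_nonneg x]
  rw [le_div_iff₀ (by positivity)]
  calc 2 * (s * |x|) ≤ 2 * (r ^ 2 * r) := by gcongr
    _ = 2 * r ^ 3 := by ring

/-- the absolute value of the determinant of the mode-decomposition
matrix is `2 (ξ₁² + ξ₂² + b²)^{3/2} / ((ξ₂² + b²) |ξ₁|) ≥ 2`; in particular the
matrix is invertible. -/
theorem abs_det_mode_matrix (ξ₁ ξ₂ b : ℝ) (hξ₁ : ξ₁ ≠ 0) (hs : ξ₂ ^ 2 + b ^ 2 > 0) :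
    let r : ℝ := Real.sqrt (ξ₁ ^ 2 + ξ₂ ^ 2 + b ^ 2)
    let s : ℝ := ξ₂ ^ 2 + b ^ 2
    let M : Matrix (Fin 3) (Fin 3) ℂ :=
      !![((ξ₂ * r : ℝ) + Complex.I * (ξ₁ * b : ℝ)) / (s : ℝ),
          -Complex.I * (b : ℝ) / (ξ₁ : ℝ),
          ((-(ξ₂ * r) : ℝ) + Complex.I * (ξ₁ * b : ℝ)) / (s : ℝ);
        ((ξ₁ * ξ₂ : ℝ) + Complex.I * (b * r : ℝ)) / (s : ℝ),
          -(ξ₂ : ℝ) / (ξ₁ : ℝ),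
          ((ξ₁ * ξ₂ : ℝ) - Complex.I * (b * r : ℝ)) / (s : ℝ);
        1, 1, 1]
    ‖M.det‖ = 2 * r ^ 3 / (s * |ξ₁|) ∧
      2 ≤ ‖M.det‖ ∧ IsUnit M := by
  intro r s M
  have hs' : 0 < s := hs
  have hr2 : r ^ 2 = ξ₁ ^ 2 + s := by
    rw [Real.sq_sqrt (by positivity)]
    ring
  have hdet : M.det = ((-(2 * r ^ 3 / (s * ξ₁)) : ℝ) : ℂ) := by
    have hr2C : (r : ℂ) ^ 2 = ξ₁ ^ 2 + ξ₂ ^ 2 + b ^ 2 := by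
      exact_mod_cast hr2.trans (add_assoc _ _ _).symm
    have hM : M = modeMatrix ξ₁ ξ₂ b r := by
      simp only [M, modeMatrix, s]
      push_cast
      rfl
    rw [hM, det_modeMatrix _ (mod_cast hξ₁) (mod_cast hs.ne'), ← hr2C]
    push_cast [s]
    ring
  have hnorm : ‖M.det‖ = 2 * r ^ 3 / (s * |ξ₁|) := by
    rw [hdet, norm_real, norm_neg, Real.norm_eq_abs, abs_div, abs_mul, abs_mul, abs_two,
      abs_of_nonneg (by positivity : 0 ≤ r ^ 3), abs_of_pos hs']
  have htwo : 2 ≤ ‖M.det‖ :=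
    hnorm ▸ two_le_two_mul_pow_three_div hξ₁ hs' (Real.sqrt_nonneg _) hr2
  refine ⟨hnorm, htwo, ?_⟩
  rw [isUnit_iff_isUnit_det, isUnit_iff_ne_zero, ← norm_pos_iff]
  linarith
end

section
/- Let ξ₁, ξ₂, b be real numbers with ξ₁ ≠ 0 and s := ξ₂² + b² > 0, and set r := √(ξ₁² + ξ₂² + b²). Then the vectors q⁺ := ((−ξ₂ r + i ξ₁ b)/s, (ξ₁ ξ₂ − i b r)/s, 1) and q⁻ := ((ξ₂ r + i ξ₁ b)/s, (ξ₁ ξ₂ + i b r)/s, 1) are eigenvectors of the matrix A := [[0, iξ₁, iξ₂], [iξ₁, 0, −b], [iξ₂, b, 0]]: A q⁺ = −i r q⁺ and A q⁻ = i r q⁻. -/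
open Complex Matrix

def shallowWaterSymbol (ξ₁ ξ₂ b : ℂ) : Matrix (Fin 3) (Fin 3) ℂ :=
  !![0, I * ξ₁, I * ξ₂; I * ξ₁, 0, -b; I * ξ₂, b, 0]

/-- `s • q⁺` with `s = ξ₂² + b²`; replacing `r` by `-r` gives `s • q⁻`. -/
def poincareVector (ξ₁ ξ₂ b r : ℂ) : Fin 3 → ℂ :=
  ![-(ξ₂ * r) + I * (ξ₁ * b), ξ₁ * ξ₂ - I * (b * r), ξ₂ ^ 2 + b ^ 2]

theorem shallowWaterSymbol_mulVec_poincareVector {ξ₁ ξ₂ b r : ℂ}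
    (hr : r ^ 2 = ξ₁ ^ 2 + ξ₂ ^ 2 + b ^ 2) :
    shallowWaterSymbol ξ₁ ξ₂ b *ᵥ poincareVector ξ₁ ξ₂ b r =
      (-(I * r)) • poincareVector ξ₁ ξ₂ b r := by
  ext i
  fin_cases i <;>
    simp [shallowWaterSymbol, poincareVector, mulVec, dotProduct, Fin.sum_univ_three]
  · linear_combination (-(I * ξ₂)) * hr
  · linear_combination (b * (ξ₁ ^ 2 - r ^ 2)) * I_sq + b * hr
  · linear_combination (ξ₂ * ξ₁ * b) * I_sq

theorem shallowWaterSymbol_mulVec_smul_poincareVector {ξ₁ ξ₂ b r c : ℂ}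
    (hr : r ^ 2 = ξ₁ ^ 2 + ξ₂ ^ 2 + b ^ 2) :
    shallowWaterSymbol ξ₁ ξ₂ b *ᵥ (c • poincareVector ξ₁ ξ₂ b r) =
      (-(I * r)) • c • poincareVector ξ₁ ξ₂ b r := by
  rw [mulVec_smul, shallowWaterSymbol_mulVec_poincareVector hr, smul_comm]

theorem poincare_vectors_eigenvectors_general (ξ₁ ξ₂ b : ℝ)
    (hs : ξ₂ ^ 2 + b ^ 2 > 0) :
    let r : ℝ := Real.sqrt (ξ₁ ^ 2 + ξ₂ ^ 2 + b ^ 2)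
    let s : ℝ := ξ₂ ^ 2 + b ^ 2
    let A : Matrix (Fin 3) (Fin 3) ℂ :=
      !![0, Complex.I * (ξ₁ : ℝ), Complex.I * (ξ₂ : ℝ);
         Complex.I * (ξ₁ : ℝ), 0, -(b : ℝ);
         Complex.I * (ξ₂ : ℝ), (b : ℝ), 0]
    let qp : Fin 3 → ℂ :=
      ![((-(ξ₂ * r) : ℝ) + Complex.I * (ξ₁ * b : ℝ)) / (s : ℝ),
        ((ξ₁ * ξ₂ : ℝ) - Complex.I * (b * r : ℝ)) / (s : ℝ), 1]
    let qm : Fin 3 → ℂ :=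
      ![((ξ₂ * r : ℝ) + Complex.I * (ξ₁ * b : ℝ)) / (s : ℝ),
        ((ξ₁ * ξ₂ : ℝ) + Complex.I * (b * r : ℝ)) / (s : ℝ), 1]
    A *ᵥ qp = (-(Complex.I * (r : ℝ))) • qp ∧ A *ᵥ qm = (Complex.I * (r : ℝ)) • qm := by
  intro r s A qp qm
  have hs' : (ξ₂ : ℂ) ^ 2 + (b : ℂ) ^ 2 ≠ 0 := by exact_mod_cast hs.ne'
  have hr : ((r : ℝ) : ℂ) ^ 2 = (ξ₁ : ℂ) ^ 2 + (ξ₂ : ℂ) ^ 2 + (b : ℂ) ^ 2 := by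
    exact_mod_cast Real.sq_sqrt (by positivity : 0 ≤ ξ₁ ^ 2 + ξ₂ ^ 2 + b ^ 2)
  have hA : A = shallowWaterSymbol ξ₁ ξ₂ b := rfl
  have hqp : qp = ((s : ℂ)⁻¹) • poincareVector ξ₁ ξ₂ b r := by
    ext i; fin_cases i <;> simp [qp, s, poincareVector, div_eq_inv_mul, hs']
  have hqm : qm = ((s : ℂ)⁻¹) • poincareVector ξ₁ ξ₂ b (-(r : ℂ)) := by
    ext i; fin_cases i <;> simp [qm, s, poincareVector, div_eq_inv_mul, hs']
  refine ⟨?_, ?_⟩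
  · rw [hA, hqp, shallowWaterSymbol_mulVec_smul_poincareVector hr]
  · rw [hA, hqm, shallowWaterSymbol_mulVec_smul_poincareVector (by rw [neg_sq, hr]), neg_mul_eq_mul_neg, neg_neg]

/-- the Poincaré vectors `q⁺`, `q⁻` are eigenvectors of the symbol
matrix `A` with eigenvalues `−i r` and `i r` respectively. -/
theorem poincare_vectors_eigenvectors (ξ₁ ξ₂ b : ℝ) (hξ₁ : ξ₁ ≠ 0)
    (hs : ξ₂ ^ 2 + b ^ 2 > 0) :
    let r : ℝ := Real.sqrt (ξ₁ ^ 2 + ξ₂ ^ 2 + b ^ 2)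
    let s : ℝ := ξ₂ ^ 2 + b ^ 2
    let A : Matrix (Fin 3) (Fin 3) ℂ :=
      !![0, Complex.I * (ξ₁ : ℝ), Complex.I * (ξ₂ : ℝ);
         Complex.I * (ξ₁ : ℝ), 0, -(b : ℝ);
         Complex.I * (ξ₂ : ℝ), (b : ℝ), 0]
    let qp : Fin 3 → ℂ :=
      ![((-(ξ₂ * r) : ℝ) + Complex.I * (ξ₁ * b : ℝ)) / (s : ℝ),
        ((ξ₁ * ξ₂ : ℝ) - Complex.I * (b * r : ℝ)) / (s : ℝ), 1]
    let qm : Fin 3 → ℂ :=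
      ![((ξ₂ * r : ℝ) + Complex.I * (ξ₁ * b : ℝ)) / (s : ℝ),
        ((ξ₁ * ξ₂ : ℝ) + Complex.I * (b * r : ℝ)) / (s : ℝ), 1]
    A *ᵥ qp = (-(Complex.I * (r : ℝ))) • qp ∧ A *ᵥ qm = (Complex.I * (r : ℝ)) • qm :=
  poincare_vectors_eigenvectors_general ξ₁ ξ₂ b hs
end

section
/- Let ξ₁, ξ₂, b be real numbers with r := √(ξ₁² + ξ₂² + b²) > 0. Then the matrix A := [[0, iξ₁, iξ₂], [iξ₁, 0, −b], [iξ₂, b, 0]] is skew-Hermitian, and its spectrum (as a complex matrix) is exactly the set {0, i r, −i r}, consisting of three distinct purely imaginary eigenvalues. -/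
open Complex Matrix

theorem Matrix.mem_spectrum_iff_det_eq_zero {K n : Type*} [Field K] [Fintype n] [DecidableEq n]
    (A : Matrix n n K) (z : K) : z ∈ spectrum K A ↔ (algebraMap K _ z - A).det = 0 := by
  rw [spectrum.mem_iff, isUnit_iff_isUnit_det, isUnit_iff_ne_zero, not_ne_iff]

theorem Complex.mul_sq_add_sq_eq_zero_iff (z : ℂ) (r : ℝ) :
    z * (z ^ 2 + (r : ℂ) ^ 2) = 0 ↔ z = 0 ∨ z = I * r ∨ z = -(I * r) := by
  have hfactor : z ^ 2 + (r : ℂ) ^ 2 = (z - I * r) * (z + I * r) := by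
    linear_combination (r : ℂ) ^ 2 * I_sq
  rw [hfactor, mul_eq_zero, mul_eq_zero, sub_eq_zero, add_eq_zero_iff_eq_neg]

/-- The symbol of the linearized rotating shallow water operator. -/
def symbolMatrix (ξ₁ ξ₂ b : ℝ) : Matrix (Fin 3) (Fin 3) ℂ :=
  !![0, I * ξ₁, I * ξ₂;
     I * ξ₁, 0, -b;
     I * ξ₂, b, 0]

section symbolMatrix

variable (ξ₁ ξ₂ b : ℝ)

theorem symbolMatrix_conjTranspose : (symbolMatrix ξ₁ ξ₂ b)ᴴ = -symbolMatrix ξ₁ ξ₂ b := by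
  ext i j
  fin_cases i <;> fin_cases j <;> simp [symbolMatrix, conjTranspose_apply]

theorem det_algebraMap_sub_symbolMatrix (z : ℂ) :
    (algebraMap ℂ _ z - symbolMatrix ξ₁ ξ₂ b).det
      = z * (z ^ 2 + ((√(ξ₁ ^ 2 + ξ₂ ^ 2 + b ^ 2) : ℝ) : ℂ) ^ 2) := by
  have hsq : ((√(ξ₁ ^ 2 + ξ₂ ^ 2 + b ^ 2) : ℝ) : ℂ) ^ 2
      = (ξ₁ : ℂ) ^ 2 + (ξ₂ : ℂ) ^ 2 + (b : ℂ) ^ 2 := by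
    rw [← ofReal_pow, Real.sq_sqrt (by positivity)]
    push_cast
    ring
  rw [hsq, algebraMap_eq_diagonal, det_fin_three]
  simp only [symbolMatrix, Matrix.sub_apply, diagonal_apply_eq, Pi.algebraMap_apply,
    Algebra.algebraMap_self, RingHom.id_apply, of_apply, cons_val', cons_val_zero, cons_val_fin_one,
    cons_val_one, cons_val, ne_eq, Fin.reduceEq, not_false_eq_true, diagonal_apply_ne]
  linear_combination (-(z * ((ξ₁ : ℂ) ^ 2 + (ξ₂ : ℂ) ^ 2))) * I_sq

theorem spectrum_symbolMatrix :
    spectrum ℂ (symbolMatrix ξ₁ ξ₂ b)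
      = {0, I * √(ξ₁ ^ 2 + ξ₂ ^ 2 + b ^ 2), -(I * √(ξ₁ ^ 2 + ξ₂ ^ 2 + b ^ 2))} := by
  ext z
  rw [mem_spectrum_iff_det_eq_zero, det_algebraMap_sub_symbolMatrix, mul_sq_add_sq_eq_zero_iff]
  simp only [Set.mem_insert_iff, Set.mem_singleton_iff]

end symbolMatrix

/-- the symbol matrix `A` is skew-Hermitian and its spectrum is
exactly `{0, i r, −i r}`, three distinct purely imaginary eigenvalues. -/
theorem symbol_matrix_skewHermitian_spectrum (ξ₁ ξ₂ b : ℝ)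
    (hr : Real.sqrt (ξ₁ ^ 2 + ξ₂ ^ 2 + b ^ 2) > 0) :
    let r : ℝ := Real.sqrt (ξ₁ ^ 2 + ξ₂ ^ 2 + b ^ 2)
    let A : Matrix (Fin 3) (Fin 3) ℂ :=
      !![0, Complex.I * (ξ₁ : ℝ), Complex.I * (ξ₂ : ℝ);
         Complex.I * (ξ₁ : ℝ), 0, -(b : ℝ);
         Complex.I * (ξ₂ : ℝ), (b : ℝ), 0]
    Aᴴ = -A ∧
      spectrum ℂ A = {0, Complex.I * (r : ℝ), -(Complex.I * (r : ℝ))} ∧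
      ((0 : ℂ) ≠ Complex.I * (r : ℝ) ∧ (0 : ℂ) ≠ -(Complex.I * (r : ℝ)) ∧
        Complex.I * (r : ℝ) ≠ -(Complex.I * (r : ℝ))) ∧
      (∀ z ∈ spectrum ℂ A, z.re = 0) := by
  intro r A
  have hIr : I * r ≠ 0 := mul_ne_zero I_ne_zero (ofReal_ne_zero.mpr hr.ne')
  have hspec : spectrum ℂ A = {0, I * r, -(I * r)} := spectrum_symbolMatrix ξ₁ ξ₂ b
  refine ⟨symbolMatrix_conjTranspose ξ₁ ξ₂ b, hspec,
    ⟨hIr.symm, (neg_ne_zero.mpr hIr).symm, fun h => hIr (CharZero.eq_neg_self_iff.mp h)⟩, ?_⟩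
  rw [hspec]
  rintro z (rfl | rfl | rfl) <;> simp
end

section
/- Let b : ℝ → ℝ be C¹, let ε > 0 and let ξ₁, τ be real numbers with τ ≠ 0 and τ² ≠ ξ₁². Suppose R, V₁, V₂ : ℝ → ℂ are C² and the function U(t, x₁, x₂) := exp(i(ξ₁ x₁ − τ t)/ε) · (R(x₂), V₁(x₂), V₂(x₂)) solves the linearized rotating shallow water system with Coriolis parameter b(x₂)/ε. Then: (i) V₁ = i(b τ V₂ − ε ξ₁ V₂′)/(τ² − ξ₁²); (ii) R = i(ξ₁ b V₂ − ε τ V₂′)/(τ² − ξ₁²); and (iii) V₂ satisfies the second-order ODE ε² V₂″(x₂) + (τ² − ξ₁² − b(x₂)² − ε ξ₁ b′(x₂)/τ) V₂(x₂) = 0 for all x₂. -/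
/-! At `t = x₁ = 0` the phase of the mode is `1`, and the system becomes two algebraic equations
and one first-order equation in `x₂` for the profiles. The algebraic ones are a linear system in
`(V₁, R)` with determinant `τ² - ξ₁²`; solving it expresses `V₁` and `R` through `V₂` and `V₂'`.
Differentiating the formula for `R` and substituting into the third equation gives, after division
by `τ`, the scalar equation for `V₂`. -/

open Complex

/-- The linearized rotating shallow water system with Coriolis parameter `Bt x₂`
for `U = (ρ, u₁, u₂) : ℝ_t × ℝ² → ℂ³`. -/
def SolvesRSW (Bt : ℝ → ℝ) (ρ u₁ u₂ : ℝ → ℝ → ℝ → ℂ) : Prop :=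
  ∀ t x₁ x₂ : ℝ,
    deriv (fun s => ρ s x₁ x₂) t + deriv (fun y => u₁ t y x₂) x₁
        + deriv (fun y => u₂ t x₁ y) x₂ = 0 ∧
    deriv (fun s => u₁ s x₁ x₂) t + deriv (fun y => ρ t y x₂) x₁
        - (Bt x₂ : ℂ) * u₂ t x₁ x₂ = 0 ∧
    deriv (fun s => u₂ s x₁ x₂) t + deriv (fun y => ρ t x₁ y) x₂
        + (Bt x₂ : ℂ) * u₁ t x₁ x₂ = 0

noncomputable def planeWave (ε ξ₁ τ : ℝ) (V : ℝ → ℂ) : ℝ → ℝ → ℝ → ℂ :=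
  fun t x₁ x₂ => exp (I * ((ξ₁ * x₁ - τ * t : ℝ)) / (ε : ℝ)) * V x₂

lemma deriv_cexp_I_mul_ofReal_div_mul {φ : ℝ → ℝ} {a s : ℝ} (hφ : HasDerivAt φ a s)
    (ε K : ℂ) :
    deriv (fun s => exp (I * (φ s : ℂ) / ε) * K) s
      = I * a / ε * (exp (I * (φ s : ℂ) / ε) * K) := by
  have hphase : HasDerivAt (fun s => I * (φ s : ℂ) / ε) (I * a / ε) s :=
    (hφ.ofReal_comp.const_mul I).div_const ε
  rw [(hphase.cexp.mul_const K).deriv]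
  ring

namespace planeWave

variable {ε ξ₁ τ : ℝ} {V : ℝ → ℂ}

@[simp]
lemma apply_zero_zero (x₂ : ℝ) : planeWave ε ξ₁ τ V 0 0 x₂ = V x₂ := by
  simp [planeWave]

lemma deriv_time (t x₁ x₂ : ℝ) :
    deriv (fun s => planeWave ε ξ₁ τ V s x₁ x₂) t
      = -(I * τ) / ε * planeWave ε ξ₁ τ V t x₁ x₂ := by
  have hφ : HasDerivAt (fun s => ξ₁ * x₁ - τ * s) (-τ) t := by
    simpa using ((hasDerivAt_id t).const_mul τ).const_sub (ξ₁ * x₁)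
  simp only [planeWave, deriv_cexp_I_mul_ofReal_div_mul hφ]
  push_cast
  ring

lemma deriv_x₁ (t x₁ x₂ : ℝ) :
    deriv (fun y => planeWave ε ξ₁ τ V t y x₂) x₁
      = I * ξ₁ / ε * planeWave ε ξ₁ τ V t x₁ x₂ := by
  have hφ : HasDerivAt (fun y => ξ₁ * y - τ * t) ξ₁ x₁ := by
    simpa using ((hasDerivAt_id x₁).const_mul ξ₁).sub_const (τ * t)
  simp only [planeWave, deriv_cexp_I_mul_ofReal_div_mul hφ]

end planeWave

lemma SolvesRSW.planeWave_profile {b : ℝ → ℝ} {ε ξ₁ τ : ℝ} {R V₁ V₂ : ℝ → ℂ} (hε : ε ≠ 0)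
    (hU : SolvesRSW (fun x => b x / ε) (planeWave ε ξ₁ τ R) (planeWave ε ξ₁ τ V₁)
      (planeWave ε ξ₁ τ V₂))
    (x : ℝ) :
    -(I * τ) * R x + I * ξ₁ * V₁ x + ε * deriv V₂ x = 0 ∧
    -(I * τ) * V₁ x + I * ξ₁ * R x - b x * V₂ x = 0 ∧
    -(I * τ) * V₂ x + ε * deriv R x + b x * V₁ x = 0 := by
  have hεc : (ε : ℂ) ≠ 0 := by exact_mod_cast hε
  obtain ⟨h₁, h₂, h₃⟩ := hU 0 0 x
  simp only [planeWave.deriv_time, planeWave.deriv_x₁,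
    planeWave.apply_zero_zero, ofReal_div] at h₁ h₂ h₃
  refine ⟨?_, ?_, ?_⟩
  · field_simp at h₁; linear_combination h₁
  · field_simp at h₂; linear_combination h₂
  · field_simp at h₃; linear_combination h₃

section ProfileAlgebra

variable {τ ξ ε β v₁ r v₂ dv₂ : ℂ}

lemma rsw_profile_solve (hD : τ ^ 2 - ξ ^ 2 ≠ 0)
    (h₁ : -(I * τ) * r + I * ξ * v₁ + ε * dv₂ = 0)
    (h₂ : -(I * τ) * v₁ + I * ξ * r - β * v₂ = 0) :
    v₁ = I * (β * τ * v₂ - ε * ξ * dv₂) / (τ ^ 2 - ξ ^ 2) ∧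
    r = I * (ξ * β * v₂ - ε * τ * dv₂) / (τ ^ 2 - ξ ^ 2) := by
  constructor <;> rw [eq_div_iff hD]
  · linear_combination I * ξ * h₁ + I * τ * h₂ + (τ ^ 2 - ξ ^ 2) * v₁ * I_sq
  · linear_combination I * τ * h₁ + I * ξ * h₂ + (τ ^ 2 - ξ ^ 2) * r * I_sq

lemma rsw_profile_scalar_ode {dβ dr d2v₂ : ℂ} (hτ : τ ≠ 0) (hD : τ ^ 2 - ξ ^ 2 ≠ 0)
    (h₃ : -(I * τ) * v₂ + ε * dr + β * v₁ = 0)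
    (hv₁ : v₁ = I * (β * τ * v₂ - ε * ξ * dv₂) / (τ ^ 2 - ξ ^ 2))
    (hdr : dr = I * (ξ * (dβ * v₂ + β * dv₂) - ε * τ * d2v₂) / (τ ^ 2 - ξ ^ 2)) :
    ε ^ 2 * d2v₂ + (τ ^ 2 - ξ ^ 2 - β ^ 2 - ε * ξ * dβ / τ) * v₂ = 0 := by
  subst hv₁ hdr
  field_simp at h₃ ⊢
  linear_combination
    I * h₃ + (ε ^ 2 * τ * d2v₂ + (τ * (τ ^ 2 - ξ ^ 2 - β ^ 2) - ε * ξ * dβ) * v₂) * I_sq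

end ProfileAlgebra

lemma hasDerivAt_profile_combination {b : ℝ → ℝ} {V : ℝ → ℂ} {x : ℝ}
    (hb : DifferentiableAt ℝ b x) (hV : DifferentiableAt ℝ V x)
    (hV' : DifferentiableAt ℝ (deriv V) x) (α β : ℂ) :
    HasDerivAt (fun y => α * b y * V y - β * deriv V y)
      (α * (deriv b x * V x + b x * deriv V x) - β * deriv (deriv V) x) x :=
  (((hb.hasDerivAt.ofReal_comp.const_mul α).mul hV.hasDerivAt).sub
    (hV'.hasDerivAt.const_mul β)).congr_deriv (by ring)

theorem RSW_reduction_to_scalar_general (b : ℝ → ℝ) (hb : ContDiff ℝ 1 b)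
    (ε : ℝ) (hε : ε > 0) (ξ₁ τ : ℝ) (hτ : τ ≠ 0) (hττ : τ ^ 2 ≠ ξ₁ ^ 2)
    (R V₁ V₂ : ℝ → ℂ)
    (hV₂ : ContDiff ℝ 2 V₂)
    (hU : SolvesRSW (fun x₂ => b x₂ / ε)
      (fun t x₁ x₂ => Complex.exp (Complex.I * ((ξ₁ * x₁ - τ * t : ℝ)) / (ε : ℝ)) * R x₂)
      (fun t x₁ x₂ => Complex.exp (Complex.I * ((ξ₁ * x₁ - τ * t : ℝ)) / (ε : ℝ)) * V₁ x₂)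
      (fun t x₁ x₂ => Complex.exp (Complex.I * ((ξ₁ * x₁ - τ * t : ℝ)) / (ε : ℝ)) * V₂ x₂)) :
    (∀ x₂ : ℝ, V₁ x₂ =
        Complex.I * ((b x₂ : ℂ) * (τ : ℂ) * V₂ x₂ - (ε : ℂ) * (ξ₁ : ℂ) * deriv V₂ x₂)
          / ((τ ^ 2 - ξ₁ ^ 2 : ℝ) : ℂ)) ∧
    (∀ x₂ : ℝ, R x₂ =
        Complex.I * ((ξ₁ : ℂ) * (b x₂ : ℂ) * V₂ x₂ - (ε : ℂ) * (τ : ℂ) * deriv V₂ x₂)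
          / ((τ ^ 2 - ξ₁ ^ 2 : ℝ) : ℂ)) ∧
    (∀ x₂ : ℝ, (ε ^ 2 : ℂ) * deriv (deriv V₂) x₂
        + ((τ ^ 2 - ξ₁ ^ 2 - (b x₂) ^ 2 - ε * ξ₁ * deriv b x₂ / τ : ℝ) : ℂ) * V₂ x₂ = 0) := by
  have hD : (τ : ℂ) ^ 2 - (ξ₁ : ℂ) ^ 2 ≠ 0 := by exact_mod_cast sub_ne_zero.mpr hττ
  have hprofile := SolvesRSW.planeWave_profile hε.ne' hU
  have hsolve := fun x => rsw_profile_solve hD (hprofile x).1 (hprofile x).2.1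
  push_cast
  refine ⟨fun x => (hsolve x).1, fun x => (hsolve x).2, fun x => ?_⟩
  have hR' := ((hasDerivAt_profile_combination (hb.differentiable one_ne_zero x)
    (hV₂.differentiable two_ne_zero x) (hV₂.differentiable_deriv_two x) ξ₁ (ε * τ)).const_mul
      I).div_const ((τ : ℂ) ^ 2 - (ξ₁ : ℂ) ^ 2)
  rw [← funext fun x => (hsolve x).2] at hR'
  exact rsw_profile_scalar_ode (by exact_mod_cast hτ) hD (hprofile x).2.2 (hsolve x).1 hR'.deriv

/-- reduction of the linearized rotating shallow water system, for
a mode of horizontal frequency `ξ₁` and temporal frequency `τ`, to a scalar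
second order ODE for the second velocity component. -/
theorem RSW_reduction_to_scalar (b : ℝ → ℝ) (hb : ContDiff ℝ 1 b)
    (ε : ℝ) (hε : ε > 0) (ξ₁ τ : ℝ) (hτ : τ ≠ 0) (hττ : τ ^ 2 ≠ ξ₁ ^ 2)
    (R V₁ V₂ : ℝ → ℂ) (hR : ContDiff ℝ 2 R) (hV₁ : ContDiff ℝ 2 V₁)
    (hV₂ : ContDiff ℝ 2 V₂)
    (hU : SolvesRSW (fun x₂ => b x₂ / ε)
      (fun t x₁ x₂ => Complex.exp (Complex.I * ((ξ₁ * x₁ - τ * t : ℝ)) / (ε : ℝ)) * R x₂)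
      (fun t x₁ x₂ => Complex.exp (Complex.I * ((ξ₁ * x₁ - τ * t : ℝ)) / (ε : ℝ)) * V₁ x₂)
      (fun t x₁ x₂ => Complex.exp (Complex.I * ((ξ₁ * x₁ - τ * t : ℝ)) / (ε : ℝ)) * V₂ x₂)) :
    (∀ x₂ : ℝ, V₁ x₂ =
        Complex.I * ((b x₂ : ℂ) * (τ : ℂ) * V₂ x₂ - (ε : ℂ) * (ξ₁ : ℂ) * deriv V₂ x₂)
          / ((τ ^ 2 - ξ₁ ^ 2 : ℝ) : ℂ)) ∧
    (∀ x₂ : ℝ, R x₂ =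
        Complex.I * ((ξ₁ : ℂ) * (b x₂ : ℂ) * V₂ x₂ - (ε : ℂ) * (τ : ℂ) * deriv V₂ x₂)
          / ((τ ^ 2 - ξ₁ ^ 2 : ℝ) : ℂ)) ∧
    (∀ x₂ : ℝ, (ε ^ 2 : ℂ) * deriv (deriv V₂) x₂
        + ((τ ^ 2 - ξ₁ ^ 2 - (b x₂) ^ 2 - ε * ξ₁ * deriv b x₂ / τ : ℝ) : ℂ) * V₂ x₂ = 0) :=
  RSW_reduction_to_scalar_general b hb ε hε ξ₁ τ hτ hττ R V₁ V₂ hV₂ hU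
end
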